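/- For every fixed R > 0, lim_{k→∞} (h_k(R) + j_k(R))/k = 1/4, where the limit is taken over integers k → ∞. -/

import Mathlib

/-! The series of `I_{m+1}(R)` is that of `I_m(R)` with its `n`-th term multiplied by
`(R/2)/(m+n+1)`, so `(m+1) I_{m+1}(R) ≤ (R/2) I_m(R)`. Conversely `Γ(m+n+1) ≥ Γ(m+1)(m+1)^n`
bounds `I_m(R)` by its leading term times `exp((R/2)²/(m+1))`, which gives the matching lower
bound up to that factor. Hence `m · I_{m+1}(R)/I_m(R) → R/2` as `m → ∞`. With `m = k + 1/2`,
`h_k/k = (k+2)/(2k) · (k-1) I_{k+3/2}/I_{k+1/2} / R → (1/2)(R/2)/R = 1/4`, while `j_k` converges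
and so `j_k/k → 0`. -/

open Real Filter Topology

/-- The modified Bessel function of the first kind of order `m`:
`I_m(r) = ∑ (r/2)^(m+2n) / (n! Γ(m+n+1))`. -/
noncomputable def besselI (m r : ℝ) : ℝ :=
  ∑' n : ℕ, (r / 2) ^ (m + 2 * (n : ℝ)) / ((n.factorial : ℝ) * Real.Gamma (m + (n : ℝ) + 1))

/-- `h_k(R) = ((k²+k)/2 - 1)·I_{k+3/2}(R)/(R·I_{k+1/2}(R))`. -/
noncomputable def hfun (k : ℕ) (R : ℝ) : ℝ :=
  (((k : ℝ) ^ 2 + k) / 2 - 1) * (besselI ((k : ℝ) + 3 / 2) R / (R * besselI ((k : ℝ) + 1 / 2) R))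

/-- `j_k(R) = 1 - 3 I_{3/2}(R)/(R I_{1/2}(R)) - I_{3/2}(R) I_{k+3/2}(R)/(I_{1/2}(R) I_{k+1/2}(R))`. -/
noncomputable def jfun (k : ℕ) (R : ℝ) : ℝ :=
  1 - 3 * besselI (3 / 2) R / (R * besselI (1 / 2) R)
    - besselI (3 / 2) R * besselI ((k : ℝ) + 3 / 2) R
      / (besselI (1 / 2) R * besselI ((k : ℝ) + 1 / 2) R)

theorem Real.Gamma_add_one_mul_pow_le {m : ℝ} (hm : 0 ≤ m) (n : ℕ) :
    Gamma (m + 1) * (m + 1) ^ n ≤ Gamma (m + n + 1) := by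
  induction n with
  | zero => simp
  | succ n ih =>
    have hpos : 0 < m + n + 1 := by positivity
    rw [Nat.cast_succ, show m + (n + 1) + 1 = m + n + 1 + 1 by ring, Gamma_add_one hpos.ne']
    calc Gamma (m + 1) * (m + 1) ^ (n + 1) = (m + 1) * (Gamma (m + 1) * (m + 1) ^ n) := by ring
      _ ≤ (m + n + 1) * Gamma (m + n + 1) := by gcongr; linarith

section besselI

variable {m r : ℝ}

noncomputable def besselITerm (m r : ℝ) (n : ℕ) : ℝ :=
  (r / 2) ^ (m + 2 * (n : ℝ)) / ((n.factorial : ℝ) * Gamma (m + (n : ℝ) + 1))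

theorem besselI_eq_tsum (m r : ℝ) : besselI m r = ∑' n, besselITerm m r n := rfl

theorem besselITerm_zero (m r : ℝ) : besselITerm m r 0 = (r / 2) ^ m / Gamma (m + 1) := by
  simp [besselITerm]

theorem besselITerm_nonneg (hm : 0 ≤ m) (hr : 0 ≤ r) (n : ℕ) : 0 ≤ besselITerm m r n := by
  have := Gamma_pos_of_pos (by positivity : 0 < m + n + 1)
  unfold besselITerm
  positivity

theorem besselITerm_le (hm : 0 ≤ m) (hr : 0 < r) (n : ℕ) :
    besselITerm m r n ≤ besselITerm m r 0 * (((r / 2) ^ 2 / (m + 1)) ^ n / n.factorial) := by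
  have hpow : (r / 2) ^ (m + 2 * (n : ℝ)) = (r / 2) ^ m * ((r / 2) ^ 2) ^ n := by
    rw [rpow_add (by positivity), ← pow_mul, ← rpow_natCast]
    push_cast
    ring_nf
  have := Gamma_pos_of_pos (by positivity : 0 < m + 1)
  calc besselITerm m r n
      = (r / 2) ^ m * ((r / 2) ^ 2) ^ n / (n.factorial * Gamma (m + n + 1)) := by
        rw [besselITerm, hpow]
    _ ≤ (r / 2) ^ m * ((r / 2) ^ 2) ^ n / (n.factorial * (Gamma (m + 1) * (m + 1) ^ n)) := by
        gcongr
        exact Gamma_add_one_mul_pow_le hm n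
    _ = _ := by
        rw [besselITerm_zero, div_pow]
        ring

theorem summable_besselITerm (hm : 0 ≤ m) (hr : 0 < r) : Summable (besselITerm m r) :=
  .of_nonneg_of_le (besselITerm_nonneg hm hr.le) (besselITerm_le hm hr)
    ((summable_pow_div_factorial _).mul_left _)

theorem besselITerm_zero_le_besselI (hm : 0 ≤ m) (hr : 0 < r) :
    besselITerm m r 0 ≤ besselI m r :=
  besselI_eq_tsum m r ▸
    (summable_besselITerm hm hr).le_tsum 0 fun n _ ↦ besselITerm_nonneg hm hr.le n

theorem besselI_pos (hm : 0 ≤ m) (hr : 0 < r) : 0 < besselI m r := by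
  refine lt_of_lt_of_le ?_ (besselITerm_zero_le_besselI hm hr)
  have := Gamma_pos_of_pos (by positivity : 0 < m + 1)
  rw [besselITerm_zero]
  positivity

theorem besselI_le_mul_exp (hm : 0 ≤ m) (hr : 0 < r) :
    besselI m r ≤ besselITerm m r 0 * exp ((r / 2) ^ 2 / (m + 1)) := by
  rw [exp_eq_exp_ℝ, NormedSpace.exp_eq_tsum_div, ← tsum_mul_left, besselI_eq_tsum]
  exact (summable_besselITerm hm hr).tsum_le_tsum (besselITerm_le hm hr)
    ((summable_pow_div_factorial _).mul_left _)

theorem besselITerm_add_one (hm : 0 ≤ m) (hr : 0 < r) (n : ℕ) :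
    besselITerm (m + 1) r n = (r / 2) / (m + n + 1) * besselITerm m r n := by
  have hpos : 0 < m + n + 1 := by positivity
  have := Gamma_pos_of_pos hpos
  rw [besselITerm, besselITerm, show m + 1 + 2 * (n : ℝ) = m + 2 * n + 1 by ring,
    rpow_add_one (by positivity), show m + 1 + (n : ℝ) + 1 = m + n + 1 + 1 by ring,
    Gamma_add_one hpos.ne']
  field_simp

theorem mul_besselI_add_one_le (hm : 0 ≤ m) (hr : 0 < r) :
    (m + 1) * besselI (m + 1) r ≤ r / 2 * besselI m r := by
  rw [besselI_eq_tsum, besselI_eq_tsum, ← tsum_mul_left, ← tsum_mul_left]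
  refine ((summable_besselITerm (by linarith) hr).mul_left _).tsum_le_tsum (fun n ↦ ?_)
    ((summable_besselITerm hm hr).mul_left _)
  have hpos : 0 < m + n + 1 := by positivity
  rw [besselITerm_add_one hm hr, ← mul_assoc]
  gcongr
  · exact besselITerm_nonneg hm hr.le n
  · rw [mul_div_assoc', div_le_iff₀ hpos]
    nlinarith [n.cast_nonneg (α := ℝ)]

theorem le_mul_besselI_add_one (hm : 0 ≤ m) (hr : 0 < r) :
    r / 2 * exp (-((r / 2) ^ 2 / (m + 1))) * besselI m r ≤ (m + 1) * besselI (m + 1) r := by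
  calc r / 2 * exp (-((r / 2) ^ 2 / (m + 1))) * besselI m r
      ≤ r / 2 * exp (-((r / 2) ^ 2 / (m + 1)))
          * (besselITerm m r 0 * exp ((r / 2) ^ 2 / (m + 1))) := by
        gcongr
        exact besselI_le_mul_exp hm hr
    _ = (m + 1) * besselITerm (m + 1) r 0 := by
        have : m + 1 ≠ 0 := by positivity
        rw [besselITerm_add_one hm hr, exp_neg]
        field_simp
        ring
    _ ≤ (m + 1) * besselI (m + 1) r := by
        gcongr
        exact besselITerm_zero_le_besselI (by linarith) hr

theorem tendsto_add_one_mul_besselI_add_one_div_besselI (hr : 0 < r) :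
    Tendsto (fun m ↦ (m + 1) * (besselI (m + 1) r / besselI m r)) atTop (𝓝 (r / 2)) := by
  have hexp :
      Tendsto (fun m : ℝ ↦ r / 2 * exp (-((r / 2) ^ 2 / (m + 1)))) atTop (𝓝 (r / 2)) := by
    have h0 : Tendsto (fun m : ℝ ↦ -((r / 2) ^ 2 / (m + 1))) atTop (𝓝 0) := by
      simpa using (tendsto_const_nhds.div_atTop
        (tendsto_atTop_add_const_right atTop (1 : ℝ) tendsto_id)).neg
    simpa using ((continuous_exp.tendsto 0).comp h0).const_mul (r / 2)
  refine tendsto_of_tendsto_of_tendsto_of_le_of_le' hexp tendsto_const_nhds ?_ ?_ <;>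
    filter_upwards [eventually_ge_atTop 0] with m hm <;>
    rw [mul_div_assoc']
  · exact (le_div_iff₀ (besselI_pos hm hr)).2 (le_mul_besselI_add_one hm hr)
  · exact (div_le_iff₀ (besselI_pos hm hr)).2 (mul_besselI_add_one_le hm hr)

theorem tendsto_besselI_add_one_div_besselI (hr : 0 < r) :
    Tendsto (fun m ↦ besselI (m + 1) r / besselI m r) atTop (𝓝 0) := by
  have hinv : Tendsto (fun m : ℝ ↦ (m + 1)⁻¹) atTop (𝓝 0) :=
    (tendsto_atTop_add_const_right atTop (1 : ℝ) tendsto_id).inv_tendsto_atTop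
  have := (tendsto_add_one_mul_besselI_add_one_div_besselI hr).mul hinv
  rw [mul_zero] at this
  refine this.congr' ?_
  filter_upwards [eventually_ge_atTop 0] with m hm
  have : m + 1 ≠ 0 := by positivity
  field_simp

theorem tendsto_add_mul_besselI_add_one_div_besselI (hr : 0 < r) (c : ℝ) :
    Tendsto (fun m ↦ (m + c) * (besselI (m + 1) r / besselI m r)) atTop (𝓝 (r / 2)) := by
  have := (tendsto_add_one_mul_besselI_add_one_div_besselI hr).add
    ((tendsto_besselI_add_one_div_besselI hr).const_mul (c - 1))
  rw [mul_zero, add_zero] at this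
  exact this.congr fun m ↦ by ring

end besselI

theorem tendsto_hfun_div_natCast {R : ℝ} (hR : 0 < R) :
    Tendsto (fun k : ℕ ↦ hfun k R / k) atTop (𝓝 (1 / 4)) := by
  have hratio := (tendsto_add_mul_besselI_add_one_div_besselI hR (-3 / 2)).comp
    (tendsto_atTop_add_const_right _ (1 / 2 : ℝ) tendsto_natCast_atTop_atTop)
  have hlin := tendsto_add_mul_div_add_mul_atTop_nhds (2 : ℝ) 0 1 two_ne_zero
  have hlim := (hlin.mul hratio).div_const R
  rw [show 1 / 2 * (R / 2) / R = 1 / 4 by field_simp; norm_num] at hlim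
  refine hlim.congr' ?_
  filter_upwards [eventually_ne_atTop 0] with k hk
  have hk' : (k : ℝ) ≠ 0 := Nat.cast_ne_zero.2 hk
  simp only [Function.comp, hfun, show (k : ℝ) + 1 / 2 + 1 = k + 3 / 2 by ring]
  field_simp
  ring

theorem tendsto_jfun_div_natCast {R : ℝ} (hR : 0 < R) :
    Tendsto (fun k : ℕ ↦ jfun k R / k) atTop (𝓝 0) := by
  have hratio := (tendsto_besselI_add_one_div_besselI hR).comp
    (tendsto_atTop_add_const_right _ (1 / 2 : ℝ) tendsto_natCast_atTop_atTop)
  have hj := (tendsto_const_nhds (x := 1 - 3 * besselI (3 / 2) R / (R * besselI (1 / 2) R))).sub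
    (hratio.const_mul (besselI (3 / 2) R / besselI (1 / 2) R))
  refine (hj.div_atTop tendsto_natCast_atTop_atTop).congr fun k ↦ ?_
  simp only [Function.comp, jfun, show (k : ℝ) + 1 / 2 + 1 = k + 3 / 2 by ring]
  ring

/-- `(h_k(R) + j_k(R))/k → 1/4` as the integer `k → ∞`. -/
theorem stmt9 (R : ℝ) (hR : 0 < R) :
    Filter.Tendsto (fun k : ℕ => (hfun k R + jfun k R) / (k : ℝ))
      Filter.atTop (nhds (1 / 4)) := by
  simpa [add_div] using (tendsto_hfun_div_natCast hR).add (tendsto_jfun_div_natCast hR)
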